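/- arXiv:math/0605218 — 3 statements merged into one kernel-verified Lean document; each statement's English description precedes it below -/
import Mathlib

section
/- For every positive integer N and every integer r ≥ 0, ⟨ω_r⟩ = Σ_{[G]} y^{e(G)} · N(N−1)⋯(N−|V(G)|+1)/(|Aut(G)| · N^{e(G)}), an identity of polynomials in the variable y, where the sum is over all isomorphism classes [G] of nimple graphs with at most N vertices that admit a trail double cover consisting of r closed trails, and e(G) denotes the number of edges of G. -/
/-
Only the pairing of every directed edge with its reversal has non-zero Wick weight, so
`⟨∏_{e ∈ q} M_e⟩` is `N^{-|q|/2}` when `q` is symmetric and loop-free, and `0` otherwise. Such a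
`q` is the set of darts of a nimple graph `G` on `n ≤ N` vertices relabelled along an embedding
`Fin n ↪ Fin N`, and the decompositions of `q` into `r` closed trails are the images of the TDCs
of `G` with `r` trails. The embeddings with a given image form an `Aut(G)`-torsor, so `G`
contributes `N(N-1)⋯(N-n+1)/|Aut(G)|` distinct sets `q`, each of weight `N^{-e(G)} y^{e(G)}`.
-/

open scoped Classical

/-- A closed walk (a cyclic sequence of directed edges, recorded as a list up to
rotation): the head of each edge is the tail of the next, cyclically. -/
def IsClosedWalk {α : Type*} (l : List (α × α)) : Prop :=
  ∃ h : l ≠ [], List.Chain' (fun e f => e.2 = f.1) l ∧ (l.getLast h).2 = (l.head h).1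

/-- A closed trail: a closed walk with no repeated directed edge. -/
def IsClosedTrail {α : Type*} (l : List (α × α)) : Prop :=
  IsClosedWalk l ∧ l.Nodup

/-- `L` is a decomposition of the set `q` of directed edges into `r` pairwise
edge-disjoint closed trails. -/
def IsTrailDecomp {α : Type*} {r : ℕ} (q : Finset (α × α)) (L : Fin r → List (α × α)) : Prop :=
  (∀ i, IsClosedTrail (L i)) ∧
  (∀ i j, i ≠ j → ∀ e, e ∈ L i → e ∉ L j) ∧
  (∀ e, e ∈ q ↔ ∃ i, e ∈ L i)

/-- `W(r)`: the subsets of `{1,…,N}×{1,…,N}` decomposable into `r` pairwise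
edge-disjoint closed trails. -/
noncomputable def trailSets (N r : ℕ) : Finset (Finset (Fin N × Fin N)) :=
  Finset.univ.filter fun q => ∃ L : Fin r → List (Fin N × Fin N), IsTrailDecomp q L

/-- The Wick weight of an unordered pair of directed edges:
`⟨M_{ij} M_{kl}⟩ = δ_{il} δ_{jk} / N`. -/
noncomputable def pairWeight (N : ℕ) : Sym2 (Fin N × Fin N) → ℚ :=
  Sym2.lift ⟨fun e f => if e.1 = f.2 ∧ e.2 = f.1 then (N : ℚ)⁻¹ else 0, by
    intro e f
    have h : (e.1 = f.2 ∧ e.2 = f.1) ↔ (f.1 = e.2 ∧ f.2 = e.1) :=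
      ⟨fun h => ⟨h.2.symm, h.1.symm⟩, fun h => ⟨h.2.symm, h.1.symm⟩⟩
    simp [h]⟩

/-- `P` is a partition of `q` into unordered pairs (of distinct elements). -/
def IsPairPartition {α : Type*} (q : Finset α) (P : Finset (Sym2 α)) : Prop :=
  (∀ p ∈ P, ¬ p.IsDiag) ∧
  (∀ p ∈ P, ∀ a ∈ p, a ∈ q) ∧
  (∀ a ∈ q, ∃! p, p ∈ P ∧ a ∈ p)

/-- The combinatorial Gaussian bracket of the monomial `∏_{e ∈ q} M_e`:
the sum over all partitions of `q` into unordered pairs of the product of the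
Wick weights of the pairs. -/
noncomputable def bracketMono (N : ℕ) (q : Finset (Fin N × Fin N)) : ℚ :=
  ∑ P ∈ Finset.univ.filter (fun P : Finset (Sym2 (Fin N × Fin N)) => IsPairPartition q P),
    ∏ p ∈ P, pairWeight N p

/-- A trail double cover of `G` consisting of `r` closed trails: every edge of `G` is
traversed exactly twice, once in each direction. -/
def IsTDC {V : Type*} {r : ℕ} (G : SimpleGraph V) (L : Fin r → List (V × V)) : Prop :=
  (∀ i, IsClosedTrail (L i)) ∧
  (∀ i, ∀ e ∈ L i, G.Adj e.1 e.2) ∧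
  (∀ x y, G.Adj x y → ∃! i, (x, y) ∈ L i)

/-- A graph is nimple if it is simple (automatic for `SimpleGraph`) and has
no vertex of degree 0. -/
def Nimple {V : Type*} (G : SimpleGraph V) : Prop :=
  ∀ v, ∃ w, G.Adj v w

open Finset Polynomial

lemma IsPairPartition.card_eq_two_mul {β : Type*} {q : Finset β} {P : Finset (Sym2 β)}
    (hP : IsPairPartition q P) : #q = 2 * #P := by
  have hq : q = P.biUnion Sym2.toFinset := by
    ext a
    simp only [mem_biUnion, Sym2.mem_toFinset]
    exact ⟨fun ha => (hP.2.2 a ha).exists, fun ⟨p, hp, ha⟩ => hP.2.1 p hp a ha⟩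
  have hdisj : (P : Set (Sym2 β)).PairwiseDisjoint Sym2.toFinset := by
    intro p hp p' hp' hne
    refine disjoint_left.mpr fun a ha ha' => hne ?_
    rw [Sym2.mem_toFinset] at ha ha'
    exact (hP.2.2 a (hP.2.1 p hp a ha)).unique ⟨hp, ha⟩ ⟨hp', ha'⟩
  rw [hq, card_biUnion hdisj,
    sum_congr rfl fun p hp => Sym2.card_toFinset_of_not_isDiag p (hP.1 p hp),
    sum_const, smul_eq_mul, mul_comm]

section SwapPairing

variable {α : Type*} {q : Finset (α × α)} {P : Finset (Sym2 (α × α))}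

def IsSymmIrrefl (q : Finset (α × α)) : Prop :=
  (∀ e ∈ q, e.1 ≠ e.2) ∧ ∀ e ∈ q, e.swap ∈ q

lemma swap_pair_eq_of_mem {e e' : α × α} (h : e ∈ s(e', e'.swap)) :
    s(e', e'.swap) = s(e, e.swap) := by
  rcases Sym2.mem_iff.mp h with rfl | rfl
  · rfl
  · rw [Prod.swap_swap, Sym2.eq_swap]

lemma IsPairPartition.swap_pair_mem (hP : IsPairPartition q P)
    (hswap : ∀ p ∈ P, ∃ e, p = s(e, e.swap)) {e : α × α} (he : e ∈ q) : s(e, e.swap) ∈ P := by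
  obtain ⟨p, ⟨hp, hep⟩, -⟩ := hP.2.2 e he
  obtain ⟨e', rfl⟩ := hswap p hp
  rwa [← swap_pair_eq_of_mem hep]

lemma IsPairPartition.isSymmIrrefl (hP : IsPairPartition q P)
    (hswap : ∀ p ∈ P, ∃ e, p = s(e, e.swap)) : IsSymmIrrefl q := by
  refine ⟨fun e he h => hP.1 _ (hP.swap_pair_mem hswap he) ?_,
    fun e he => hP.2.1 _ (hP.swap_pair_mem hswap he) _ (Sym2.mem_mk_right _ _)⟩
  rw [Sym2.mk_isDiag_iff]
  exact Prod.ext h h.symm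

variable [DecidableEq α]

def swapPairing (q : Finset (α × α)) : Finset (Sym2 (α × α)) :=
  q.image fun e => s(e, e.swap)

lemma isPairPartition_swapPairing (hq : IsSymmIrrefl q) : IsPairPartition q (swapPairing q) := by
  refine ⟨?_, ?_, fun a ha => ⟨s(a, a.swap), ⟨mem_image_of_mem _ ha, Sym2.mem_mk_left _ _⟩, ?_⟩⟩
  · simp only [swapPairing, forall_mem_image, Sym2.mk_isDiag_iff]
    exact fun e he h => hq.1 e he (congrArg Prod.fst h)
  · simp only [swapPairing, forall_mem_image, Sym2.mem_iff]
    rintro e he a (rfl | rfl)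
    exacts [he, hq.2 e he]
  · simp only [swapPairing, mem_image]
    rintro _ ⟨⟨e, -, rfl⟩, hae⟩
    exact swap_pair_eq_of_mem hae

lemma IsPairPartition.eq_swapPairing (hP : IsPairPartition q P)
    (hswap : ∀ p ∈ P, ∃ e, p = s(e, e.swap)) : P = swapPairing q := by
  ext p
  simp only [swapPairing, mem_image]
  constructor
  · intro hp
    obtain ⟨e, rfl⟩ := hswap p hp
    exact ⟨e, hP.2.1 _ hp e (Sym2.mem_mk_left _ _), rfl⟩
  · rintro ⟨e, he, rfl⟩
    exact hP.swap_pair_mem hswap he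

end SwapPairing

lemma pairWeight_mk (N : ℕ) (e f : Fin N × Fin N) :
    pairWeight N s(e, f) = if f = e.swap then (N : ℚ)⁻¹ else 0 := by
  have : (e.1 = f.2 ∧ e.2 = f.1) ↔ f = e.swap := by
    rw [Prod.ext_iff, Prod.fst_swap, Prod.snd_swap, eq_comm, and_comm, @eq_comm _ e.2]
  simp [pairWeight, this]

lemma exists_eq_swap_of_pairWeight_ne_zero {N : ℕ} {p : Sym2 (Fin N × Fin N)}
    (hp : pairWeight N p ≠ 0) : ∃ e, p = s(e, e.swap) := by
  induction p using Sym2.ind with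
  | _ e f =>
    rw [pairWeight_mk] at hp
    exact ⟨e, by rw [of_not_not fun h => hp (if_neg h)]⟩

lemma bracketMono_eq (N : ℕ) (q : Finset (Fin N × Fin N)) :
    bracketMono N q = if IsSymmIrrefl q then (N : ℚ)⁻¹ ^ (#q / 2) else 0 := by
  have hswap : ∀ P, ∏ p ∈ P, pairWeight N p ≠ 0 → ∀ p ∈ P, ∃ e, p = s(e, e.swap) :=
    fun P hP p hp => exists_eq_swap_of_pairWeight_ne_zero (prod_ne_zero_iff.mp hP p hp)
  unfold bracketMono
  split_ifs with hq
  · have hP₀ := isPairPartition_swapPairing hq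
    rw [sum_eq_single_of_mem _ (mem_filter.mpr ⟨mem_univ _, hP₀⟩)]
    · rw [prod_congr rfl fun p hp => ?_, prod_const, hP₀.card_eq_two_mul,
        Nat.mul_div_cancel_left _ two_pos]
      obtain ⟨e, -, rfl⟩ := mem_image.mp hp
      simp [pairWeight_mk]
    · intro P hP hne
      by_contra hprod
      exact hne ((mem_filter.mp hP).2.eq_swapPairing (hswap P hprod))
  · refine sum_eq_zero fun P hP => ?_
    by_contra hprod
    exact hq ((mem_filter.mp hP).2.isSymmIrrefl (hswap P hprod))

instance {V W : Type*} [Finite V] [Finite W] (G : SimpleGraph V) (G' : SimpleGraph W) :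
    Finite (G ≃g G') :=
  Finite.of_injective _ RelIso.toEquiv_injective

section DartImage

variable {V α : Type*} [Fintype V] {G G' : SimpleGraph V} {f f' : V ↪ α}

noncomputable def dartImage (G : SimpleGraph V) (f : V ↪ α) : Finset (α × α) :=
  univ.map ((⟨SimpleGraph.Dart.toProd, SimpleGraph.Dart.toProd_injective⟩ : G.Dart ↪ V × V).trans
    (f.prodMap f))

lemma mem_dartImage {e : α × α} : e ∈ dartImage G f ↔ ∃ a b, G.Adj a b ∧ (f a, f b) = e := by
  simp only [dartImage, mem_map, mem_univ, true_and, Function.Embedding.trans_apply,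
    Function.Embedding.coeFn_mk, Function.Embedding.coe_prodMap, Prod.map]
  exact ⟨fun ⟨d, hd⟩ => ⟨_, _, d.adj, hd⟩, fun ⟨a, b, hab, he⟩ => ⟨⟨(a, b), hab⟩, he⟩⟩

lemma mk_mem_dartImage {a b : V} : (f a, f b) ∈ dartImage G f ↔ G.Adj a b := by
  simp [mem_dartImage]

lemma isSymmIrrefl_dartImage : IsSymmIrrefl (dartImage G f) := by
  constructor <;> intro e he <;> obtain ⟨a, b, hab, rfl⟩ := mem_dartImage.mp he
  · exact fun h => hab.ne (f.injective h)
  · exact mk_mem_dartImage.mpr hab.symm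

lemma card_dartImage : #(dartImage G f) = 2 * G.edgeSet.ncard := by
  rw [dartImage, card_map, card_univ, G.dart_card_eq_twice_card_edges, ← Set.ncard_coe_finset,
    SimpleGraph.coe_edgeFinset]

lemma image_fst_dartImage [DecidableEq α] :
    (dartImage G f).image Prod.fst = (univ.filter fun a => ∃ b, G.Adj a b).map f := by
  ext v
  simp only [mem_image, mem_map, mem_filter, mem_univ, true_and, mem_dartImage]
  constructor
  · rintro ⟨_, ⟨a, b, hab, rfl⟩, rfl⟩
    exact ⟨a, ⟨b, hab⟩, rfl⟩
  · rintro ⟨a, ⟨b, hab⟩, rfl⟩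
    exact ⟨_, ⟨a, b, hab, rfl⟩, rfl⟩

lemma card_image_fst_dartImage_eq_iff [DecidableEq α] :
    #((dartImage G f).image Prod.fst) = Fintype.card V ↔ Nimple G := by
  rw [image_fst_dartImage, card_map, ← card_univ, card_filter_eq_iff]
  simp [Nimple]

lemma dartImage_comp_iso (φ : G' ≃g G) (f : V ↪ α) :
    dartImage G' (φ.toEquiv.toEmbedding.trans f) = dartImage G f := by
  ext e
  simp only [mem_dartImage, Function.Embedding.trans_apply, Equiv.coe_toEmbedding]
  constructor
  · rintro ⟨a, b, hab, rfl⟩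
    exact ⟨φ a, φ b, φ.map_adj_iff.mpr hab, rfl⟩
  · rintro ⟨a, b, hab, rfl⟩
    exact ⟨φ.symm a, φ.symm b, φ.symm.map_adj_iff.mpr hab, by simp⟩

lemma exists_iso_of_dartImage_eq (hG : Nimple G) (h : dartImage G f = dartImage G' f') :
    ∃ φ : G ≃g G', ∀ a, f' (φ a) = f a := by
  -- every vertex of a nimple graph is the tail of a dart, so `f` lands in the range of `f'`
  have htail : ∀ a, ∃ x, f' x = f a := by
    intro a
    obtain ⟨b, hab⟩ := hG a
    obtain ⟨x, y, -, hxy⟩ := mem_dartImage.mp (h ▸ mk_mem_dartImage.mpr hab)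
    exact ⟨x, congrArg Prod.fst hxy⟩
  choose φ hφ using htail
  have hinj : Function.Injective φ := fun a b hab => f.injective (by rw [← hφ, ← hφ, hab])
  refine ⟨⟨Equiv.ofBijective φ hinj.bijective_of_finite, fun {a b} => ?_⟩, hφ⟩
  rw [Equiv.ofBijective_apply, Equiv.ofBijective_apply, ← mk_mem_dartImage (f := f'), hφ, hφ, ← h,
    mk_mem_dartImage]

lemma natCard_aut_eq_natCard_fiber (hG : Nimple G) (f₀ : V ↪ α) :
    Nat.card (G ≃g G) = Nat.card {f : V ↪ α // dartImage G f = dartImage G f₀} := by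
  refine Nat.card_congr (Equiv.ofBijective
    (fun φ => ⟨φ.toEquiv.toEmbedding.trans f₀, dartImage_comp_iso φ f₀⟩) ⟨?_, ?_⟩)
  · intro φ ψ h
    ext a
    exact f₀.injective (congrArg (· a) (congrArg Subtype.val h))
  · rintro ⟨f, hf⟩
    obtain ⟨φ, hφ⟩ := exists_iso_of_dartImage_eq hG hf
    exact ⟨φ, Subtype.ext (Function.Embedding.ext hφ)⟩

lemma descFactorial_eq_card_image_dartImage_mul [Fintype α] [DecidableEq α] (hG : Nimple G) :
    (Fintype.card α).descFactorial (Fintype.card V)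
      = #(univ.image (dartImage G : (V ↪ α) → _)) * Nat.card (G ≃g G) := by
  rw [← Fintype.card_embedding_eq, ← card_univ,
    card_eq_sum_card_fiberwise fun f _ => mem_image_of_mem (dartImage G) (mem_univ f),
    sum_congr rfl fun q hq => ?_, sum_const, smul_eq_mul]
  obtain ⟨f₀, -, rfl⟩ := mem_image.mp hq
  rw [natCard_aut_eq_natCard_fiber hG f₀, Nat.card_eq_fintype_card, Fintype.card_subtype]

end DartImage

section Trails

variable {V α : Type*} {r : ℕ}

lemma IsClosedTrail.map {g : V → α} {l : List (V × V)}
    (hinj : ∀ e ∈ l, ∀ e' ∈ l, Prod.map g g e = Prod.map g g e' → e = e')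
    (hl : IsClosedTrail l) : IsClosedTrail (l.map (Prod.map g g)) := by
  obtain ⟨⟨hne, hchain, hcyc⟩, hnd⟩ := hl
  refine ⟨⟨by simpa using hne, (List.isChain_map _).mpr (hchain.imp fun _ _ h => congrArg g h), ?_⟩,
    hnd.map_on hinj⟩
  rw [List.getLast_map, List.head_map]
  exact congrArg g hcyc

variable [Fintype V] {G : SimpleGraph V}

lemma IsTDC.isTrailDecomp_dartImage {L : Fin r → List (V × V)} (hL : IsTDC G L) (f : V ↪ α) :
    IsTrailDecomp (dartImage G f) (fun i => (L i).map (Prod.map f f)) := by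
  obtain ⟨htrail, hadj, huniq⟩ := hL
  have hinj : Function.Injective (Prod.map f f) := f.injective.prodMap f.injective
  refine ⟨fun i => (htrail i).map fun e _ e' _ h => hinj h, ?_, fun e => ?_⟩
  · intro i j hij e hei hej
    obtain ⟨e, he, rfl⟩ := List.mem_map.mp hei
    obtain ⟨e', he', he'e⟩ := List.mem_map.mp hej
    rw [hinj he'e] at he'
    exact hij ((huniq e.1 e.2 (hadj i e he)).unique he he')
  · simp only [mem_dartImage, List.mem_map]
    constructor
    · rintro ⟨a, b, hab, rfl⟩
      obtain ⟨i, hi, -⟩ := huniq a b hab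
      exact ⟨i, (a, b), hi, rfl⟩
    · rintro ⟨i, e, he, rfl⟩
      exact ⟨e.1, e.2, hadj i e he, rfl⟩

lemma exists_isTDC_of_isTrailDecomp_dartImage {f : V ↪ α} {L : Fin r → List (α × α)}
    (hL : IsTrailDecomp (dartImage G f) L) : ∃ L' : Fin r → List (V × V), IsTDC G L' := by
  obtain ⟨htrail, hdisj, hmem⟩ := hL
  have hsrc : ∀ i, ∀ e ∈ L i, ∃ a b, G.Adj a b ∧ (f a, f b) = e :=
    fun i e he => mem_dartImage.mp ((hmem e).mpr ⟨i, he⟩)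
  -- `Function.invFun f` needs `V` nonempty; for empty `V` there are no closed trails at all.
  cases isEmpty_or_nonempty V with
  | inl hV =>
    have hr : IsEmpty (Fin r) := ⟨fun i => by
      obtain ⟨a, -⟩ := hsrc i _ (List.head_mem (htrail i).1.1)
      exact hV.elim a⟩
    exact ⟨fun _ => [], fun i => hr.elim i, fun i => hr.elim i, fun x => hV.elim x⟩
  | inr hV =>
    set g := Function.invFun f
    have hgf : ∀ a, g (f a) = a := Function.leftInverse_invFun f.injective
    refine ⟨fun i => (L i).map (Prod.map g g), fun i => (htrail i).map ?_, ?_, ?_⟩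
    · intro e he e' he' h
      obtain ⟨a, b, -, rfl⟩ := hsrc i e he
      obtain ⟨c, d, -, rfl⟩ := hsrc i e' he'
      simpa [hgf] using h
    · intro i e he
      obtain ⟨e', he', rfl⟩ := List.mem_map.mp he
      obtain ⟨a, b, hab, rfl⟩ := hsrc i e' he'
      simpa [hgf] using hab
    · intro x y hxy
      obtain ⟨i, hi⟩ := (hmem _).mp (mk_mem_dartImage.mpr hxy)
      refine ⟨i, List.mem_map.mpr ⟨(f x, f y), hi, by simp [hgf]⟩, fun j hj => ?_⟩
      obtain ⟨e', he', heq⟩ := List.mem_map.mp hj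
      obtain ⟨a, b, -, rfl⟩ := hsrc j e' he'
      simp only [Prod.map, hgf, Prod.mk.injEq] at heq
      obtain ⟨rfl, rfl⟩ := heq
      by_contra hne
      exact hdisj j i hne _ he' hi

end Trails

lemma IsSymmIrrefl.exists_nimple_dartImage_eq {α : Type*} [DecidableEq α] {q : Finset (α × α)}
    (hq : IsSymmIrrefl q) {n : ℕ} (hn : #(q.image Prod.fst) = n) :
    ∃ (G : SimpleGraph (Fin n)) (f : Fin n ↪ α), Nimple G ∧ dartImage G f = q := by
  set s := q.image Prod.fst
  let f : Fin n ↪ α := (s.equivFinOfCardEq hn).symm.toEmbedding.trans (Function.Embedding.subtype _)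
  have hf : ∀ u ∈ s, ∃ a, f a = u := fun u hu => ⟨s.equivFinOfCardEq hn ⟨u, hu⟩, by simp [f]⟩
  have hsnd : ∀ e ∈ q, e.2 ∈ s := fun e he => mem_image.mpr ⟨e.swap, hq.2 e he, rfl⟩
  let G := SimpleGraph.fromRel fun a b => (f a, f b) ∈ q
  have hadj : ∀ a b, G.Adj a b ↔ (f a, f b) ∈ q := by
    intro a b
    simp only [G, SimpleGraph.fromRel_adj]
    constructor
    · rintro ⟨-, h | h⟩
      exacts [h, hq.2 _ h]
    · exact fun h => ⟨fun hab => hq.1 _ h (congrArg f hab), Or.inl h⟩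
  refine ⟨G, f, fun a => ?_, ?_⟩
  · obtain ⟨e, he, hea⟩ := mem_image.mp ((s.equivFinOfCardEq hn).symm a).2
    obtain ⟨b, hb⟩ := hf e.2 (hsnd e he)
    refine ⟨b, (hadj a b).mpr ?_⟩
    rwa [hb, show f a = e.1 from hea.symm]
  · ext e
    rw [mem_dartImage]
    constructor
    · rintro ⟨a, b, hab, rfl⟩
      exact (hadj a b).mp hab
    · intro he
      obtain ⟨a, ha⟩ := hf e.1 (mem_image_of_mem _ he)
      obtain ⟨b, hb⟩ := hf e.2 (hsnd e he)
      exact ⟨a, b, (hadj a b).mpr (by rwa [ha, hb]), by rw [ha, hb]⟩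

abbrev GraphIsoClass (n : ℕ) := Quot fun G G' : SimpleGraph (Fin n) => Nonempty (G ≃g G')

lemma nonempty_iso_of_mk_eq {n : ℕ} {G G' : SimpleGraph (Fin n)}
    (h : (Quot.mk _ G : GraphIsoClass n) = Quot.mk _ G') : Nonempty (G ≃g G') :=
  (Equivalence.eqvGen_iff ⟨fun _ => ⟨RelIso.refl _⟩, fun ⟨φ⟩ => ⟨φ.symm⟩,
    fun ⟨φ⟩ ⟨ψ⟩ => ⟨φ.trans ψ⟩⟩).mp (Quot.eqvGen_exact h)

noncomputable def isoClass {α : Type*} (n : ℕ) (q : Finset (α × α)) : GraphIsoClass n :=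
  if h : ∃ (G : SimpleGraph (Fin n)) (f : Fin n ↪ α), Nimple G ∧ dartImage G f = q then
    Quot.mk _ h.choose
  else Quot.mk _ ⊥

lemma isoClass_eq_iff {α : Type*} {n : ℕ} {q : Finset (α × α)}
    (h : ∃ (G : SimpleGraph (Fin n)) (f : Fin n ↪ α), Nimple G ∧ dartImage G f = q)
    (c : GraphIsoClass n) : isoClass n q = c ↔ ∃ f : Fin n ↪ α, dartImage c.out f = q := by
  obtain ⟨f₀, hG₀, hq⟩ := h.choose_spec
  rw [isoClass, dif_pos h]
  constructor
  · rintro rfl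
    obtain ⟨φ⟩ := nonempty_iso_of_mk_eq (Quot.out_eq (Quot.mk _ h.choose : GraphIsoClass n))
    exact ⟨φ.toEquiv.toEmbedding.trans f₀, by rw [dartImage_comp_iso, hq]⟩
  · rintro ⟨f, hf⟩
    obtain ⟨φ, -⟩ := exists_iso_of_dartImage_eq hG₀ (hq.trans hf.symm)
    rw [← Quot.out_eq c]
    exact Quot.sound ⟨φ⟩

lemma filter_isoClass_eq (N r n : ℕ) (c : GraphIsoClass n) :
    {q ∈ {q ∈ {q ∈ trailSets N r | IsSymmIrrefl q} | #(q.image Prod.fst) = n} | isoClass n q = c}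
      = if Nimple c.out ∧ ∃ L : Fin r → List (Fin n × Fin n), IsTDC c.out L then
          univ.image (dartImage c.out)
        else ∅ := by
  have hclass : ∀ q, IsSymmIrrefl q → #(q.image Prod.fst) = n →
      (isoClass n q = c ↔ ∃ f : Fin n ↪ Fin N, dartImage c.out f = q) :=
    fun q hq hn => isoClass_eq_iff (hq.exists_nimple_dartImage_eq hn) c
  have hcard : ∀ f : Fin n ↪ Fin N,
      #((dartImage c.out f).image Prod.fst) = n ↔ Nimple c.out := fun f =>
    (Eq.congr_right (Fintype.card_fin n).symm).trans card_image_fst_dartImage_eq_iff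
  split_ifs with hc
  · obtain ⟨hG, L, hL⟩ := hc
    ext q
    simp only [trailSets, mem_filter, mem_univ, true_and, mem_image]
    constructor
    · rintro ⟨⟨⟨-, hq⟩, hn⟩, hqc⟩
      exact (hclass q hq hn).mp hqc
    · rintro ⟨f, rfl⟩
      have hn := (hcard f).mpr hG
      exact ⟨⟨⟨⟨_, hL.isTrailDecomp_dartImage f⟩, isSymmIrrefl_dartImage⟩, hn⟩,
        (hclass _ isSymmIrrefl_dartImage hn).mpr ⟨f, rfl⟩⟩
  · refine eq_empty_of_forall_notMem fun q hq => hc ?_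
    simp only [trailSets, mem_filter, mem_univ, true_and] at hq
    obtain ⟨⟨⟨⟨L, hL⟩, hq⟩, hn⟩, hqc⟩ := hq
    obtain ⟨f, rfl⟩ := (hclass q hq hn).mp hqc
    exact ⟨(hcard f).mp hn, exists_isTDC_of_isTrailDecomp_dartImage hL⟩

lemma sum_image_dartImage {N n : ℕ} {G : SimpleGraph (Fin n)} (hG : Nimple G) :
    ∑ q ∈ univ.image (dartImage G : (Fin n ↪ Fin N) → _), C ((N : ℚ)⁻¹ ^ (#q / 2)) * X ^ (#q / 2)
      = C ((N.descFactorial n : ℚ) / ((Nat.card (G ≃g G) : ℚ) * (N : ℚ) ^ G.edgeSet.ncard)) *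
          X ^ G.edgeSet.ncard := by
  have hedges : ∀ q ∈ univ.image (dartImage G : (Fin n ↪ Fin N) → _), #q / 2 = G.edgeSet.ncard := by
    intro q hq
    obtain ⟨f, -, rfl⟩ := mem_image.mp hq
    rw [card_dartImage, Nat.mul_div_cancel_left _ two_pos]
  have hdesc := descFactorial_eq_card_image_dartImage_mul (α := Fin N) hG
  rw [Fintype.card_fin, Fintype.card_fin] at hdesc
  have hAut : (Nat.card (G ≃g G) : ℚ) ≠ 0 := Nat.cast_ne_zero.mpr Nat.card_pos.ne'
  rw [sum_congr rfl fun q hq => by rw [hedges q hq], sum_const, hdesc, Nat.cast_mul,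
    mul_comm (Nat.card (G ≃g G) : ℚ), mul_div_mul_right _ _ hAut, div_eq_mul_inv, ← inv_pow,
    C_mul, map_natCast, nsmul_eq_mul, mul_assoc]

theorem bracket_omega_general (N : ℕ) (r : ℕ) :
    (∑ q ∈ trailSets N r,
        Polynomial.C (bracketMono N q) * Polynomial.X ^ (q.card / 2)) =
      ∑ n ∈ Finset.range (N + 1),
        ∑ᶠ c : Quot (fun G G' : SimpleGraph (Fin n) => Nonempty (G ≃g G')),
          if Nimple c.out ∧ ∃ L : Fin r → List (Fin n × Fin n), IsTDC c.out L then
            Polynomial.C ((N.descFactorial n : ℚ) /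
                ((Nat.card (c.out ≃g c.out) : ℚ) * (N : ℚ) ^ c.out.edgeSet.ncard)) *
              Polynomial.X ^ c.out.edgeSet.ncard
          else 0 := by
  have htails : ∀ q ∈ {q ∈ trailSets N r | IsSymmIrrefl q}, #(q.image Prod.fst) ∈ range (N + 1) :=
    fun q _ => mem_range_succ_iff.mpr ((card_le_univ _).trans_eq (Fintype.card_fin N))
  calc _ = ∑ q ∈ trailSets N r with IsSymmIrrefl q, C ((N : ℚ)⁻¹ ^ (#q / 2)) * X ^ (#q / 2) := by
        rw [sum_filter]
        refine sum_congr rfl fun q _ => ?_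
        rw [bracketMono_eq]
        split_ifs <;> simp
    _ = _ := by
        rw [← sum_fiberwise_of_maps_to htails]
        refine sum_congr rfl fun n _ => ?_
        have := Fintype.ofFinite (GraphIsoClass n)
        rw [finsum_eq_sum_of_fintype,
          ← sum_fiberwise_of_maps_to fun q _ => mem_univ (isoClass n q)]
        refine sum_congr rfl fun c _ => ?_
        rw [filter_isoClass_eq]
        split_ifs with hc
        · exact sum_image_dartImage hc.1
        · exact sum_empty

/-- `⟨ω_r⟩ = Σ_{[G]} y^{e(G)} · N(N−1)⋯(N−|V(G)|+1)/(|Aut(G)|·N^{e(G)})`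
as polynomials in `y`.  On the left, `⟨ω_r⟩ = Σ_{q ∈ W(r)} ⟨∏_{e∈q} M_e⟩ · y^{|q|/2}`
(the bracket is applied coefficientwise).  On the right, the isomorphism classes of
nimple graphs with at most `N` vertices admitting a TDC of `r` closed trails are
enumerated as the classes, for `0 ≤ n ≤ N`, of the quotient of `SimpleGraph (Fin n)`
by isomorphism (each class contributing the value at a representative `Quot.out c`;
the summand is isomorphism-invariant); `e(G)` is the number of edges. -/
theorem bracket_omega (N : ℕ) (hN : 0 < N) (r : ℕ) :
    (∑ q ∈ trailSets N r,
        Polynomial.C (bracketMono N q) * Polynomial.X ^ (q.card / 2)) =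
      ∑ n ∈ Finset.range (N + 1),
        ∑ᶠ c : Quot (fun G G' : SimpleGraph (Fin n) => Nonempty (G ≃g G')),
          if Nimple c.out ∧ ∃ L : Fin r → List (Fin n × Fin n), IsTDC c.out L then
            Polynomial.C ((N.descFactorial n : ℚ) /
                ((Nat.card (c.out ≃g c.out) : ℚ) * (N : ℚ) ^ c.out.edgeSet.ncard)) *
              Polynomial.X ^ c.out.edgeSet.ncard
          else 0 :=
  bracket_omega_general N r
end

section
/- Fix a positive integer N. Let q be a subset of {1,…,N}×{1,…,N} with a proper pairing P, and let K be a family of directed cycles on {1,…,N}. Then q is an even set and K is a decomposition of q into pairwise edge-disjoint directed cycles of length at least three if and only if there exist a nimple graph G with at most N vertices and a directed cycle double cover C of G such that (q,P,K) ∈ c(G,C). -/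
/-- A directed cycle: a closed walk visiting pairwise distinct vertices (hence with
pairwise distinct directed edges). -/
def IsDirectedCycle {α : Type*} (l : List (α × α)) : Prop :=
  IsClosedWalk l ∧ (l.map Prod.fst).Nodup

/-- `K` is a decomposition of the edge set `q` into pairwise edge-disjoint directed
cycles of length at least three. -/
def IsCycleDecomp {α : Type*} (q : Set (α × α)) (K : Set (List (α × α))) : Prop :=
  (∀ l ∈ K, IsDirectedCycle l ∧ 3 ≤ l.length) ∧
  (∀ l ∈ K, ∀ l' ∈ K, l ≠ l' → ∀ e, e ∈ l → e ∉ l') ∧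
  (∀ e, e ∈ q ↔ ∃ l ∈ K, e ∈ l)

/-- An even set of directed edges: a union of pairwise edge-disjoint directed cycles
of length greater than two. -/
def IsEvenSet {α : Type*} (q : Set (α × α)) : Prop :=
  ∃ K, IsCycleDecomp q K

/-- `K` is a directed cycle double cover of `G`: a collection of oriented cycles of
`G` such that every edge of `G` lies in exactly two of them, traversed in opposite
directions — equivalently, each directed orientation `(i,j)` of an edge of `G` lies
in exactly one cycle of `K` (a cycle with distinct vertices and length ≥ 3 cannot
traverse an edge twice). -/
def IsDCDC {V : Type*} (G : SimpleGraph V) (K : Set (List (V × V))) : Prop :=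
  (∀ l ∈ K, IsDirectedCycle l ∧ 3 ≤ l.length ∧ ∀ e ∈ l, G.Adj e.1 e.2) ∧
  (∀ i j, G.Adj i j → ∃! l, l ∈ K ∧ (i, j) ∈ l)

/-- `q` admits a proper pairing: it is partitioned into pairs `{(i,j),(j,i)}` of
oppositely directed edges; equivalently, `q` is closed under edge reversal and
contains no loop. -/
def HasProperPairing {N : ℕ} (q : Set (Fin N × Fin N)) : Prop :=
  (∀ i j, (i, j) ∈ q → (j, i) ∈ q) ∧ ∀ i, (i, i) ∉ q

/-- The (necessarily unique) proper pairing of `q`: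
`P = {{(i,j),(j,i)} : (i,j) ∈ q}`. -/
def properPairing {N : ℕ} (q : Set (Fin N × Fin N)) : Set (Sym2 (Fin N × Fin N)) :=
  {p | ∃ i j, (i, j) ∈ q ∧ p = s((i, j), (j, i))}

/-- `c(G,C)`: the set of triples `(q, P, K)` obtained from an injective colouring
`d : V(G) → {1,…,N}` as `q = {(d x, d y), (d y, d x) : {x,y} ∈ E(G)}`,
`P = {{(d x, d y), (d y, d x)} : {x,y} ∈ E(G)}`, and `K` the image of the oriented
cycles of `C` under `d`. -/
def cSetD (N : ℕ) {V : Type*} (G : SimpleGraph V) (C : Set (List (V × V))) :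
    Set (Set (Fin N × Fin N) × Set (Sym2 (Fin N × Fin N)) × Set (List (Fin N × Fin N))) :=
  {t | ∃ d : V ↪ Fin N,
    t.1 = {e | ∃ x y, G.Adj x y ∧ e = (d x, d y)} ∧
    t.2.1 = {p | ∃ x y, G.Adj x y ∧ p = s((d x, d y), (d y, d x))} ∧
    t.2.2 = (fun l => l.map fun e => (d e.1, d e.2)) '' C}

/-!
Both directions transport cycles along an injective vertex labelling `d`. Given the
decomposition `K` of `q`, let `G` be the graph that `q` induces on the vertices it covers,
labelled increasingly by `Fin n`: it is simple and nimple because `q` is symmetric, loopless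
and covers each of these vertices, and pulling `K` back along `d` gives a family in which
every orientation of an edge lies in exactly one cycle, i.e. a DCDC. Conversely, an injective
`d` maps directed cycles to directed cycles, and the uniqueness of the cycle through each
oriented edge of `G` makes the image cycles edge-disjoint.
-/

open Function

section Transport

variable {α β : Type*} {f : α → β}

set_option linter.deprecated false in
theorem isClosedWalk_map_prodMap_iff (hf : Injective f) {l : List (α × α)} :
    IsClosedWalk (l.map (Prod.map f f)) ↔ IsClosedWalk l := by
  simp only [IsClosedWalk, List.Chain', List.isChain_map, List.getLast_map, List.head_map,
    Prod.map_fst, Prod.map_snd, hf.eq_iff, ne_eq, List.map_eq_nil_iff]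

theorem isDirectedCycle_map_prodMap_iff (hf : Injective f) {l : List (α × α)} :
    IsDirectedCycle (l.map (Prod.map f f)) ↔ IsDirectedCycle l := by
  rw [IsDirectedCycle, IsDirectedCycle, isClosedWalk_map_prodMap_iff hf, List.map_map,
    Prod.map_fst', ← List.map_map, List.nodup_map_iff hf]

end Transport

theorem IsDCDC.isCycleDecomp_map {V α : Type*} {G : SimpleGraph V} {C : Set (List (V × V))}
    (hC : IsDCDC G C) (d : V ↪ α) :
    IsCycleDecomp {e | ∃ x y, G.Adj x y ∧ e = (d x, d y)} (List.map (Prod.map d d) '' C) := by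
  refine ⟨?_, ?_, fun e => ⟨?_, ?_⟩⟩
  · rintro _ ⟨l, hl, rfl⟩
    obtain ⟨hcyc, hlen, -⟩ := hC.1 l hl
    exact ⟨(isDirectedCycle_map_prodMap_iff d.injective).2 hcyc, by simpa using hlen⟩
  · rintro _ ⟨l, hl, rfl⟩ _ ⟨l', hl', rfl⟩ hne _ he he'
    obtain ⟨⟨x, y⟩, hxy, rfl⟩ := List.mem_map.1 he
    rw [List.mem_map_of_injective (d.injective.prodMap d.injective)] at he'
    exact hne <| congrArg _ <|
      (hC.2 x y ((hC.1 l hl).2.2 _ hxy)).unique ⟨hl, hxy⟩ ⟨hl', he'⟩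
  · rintro ⟨x, y, hxy, rfl⟩
    obtain ⟨l, ⟨hl, hxyl⟩, -⟩ := hC.2 x y hxy
    exact ⟨_, ⟨l, hl, rfl⟩, List.mem_map_of_mem (f := Prod.map d d) hxyl⟩
  · rintro ⟨_, ⟨l, hl, rfl⟩, he⟩
    obtain ⟨⟨x, y⟩, hxy, rfl⟩ := List.mem_map.1 he
    exact ⟨x, y, (hC.1 l hl).2.2 _ hxy, rfl⟩

section Lift

variable {α V : Type*} {q : Set (α × α)} {K : Set (List (α × α))} {G : SimpleGraph V}
  {d : V ↪ α}

theorem IsCycleDecomp.subset_range_map (hK : IsCycleDecomp q K)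
    (hq : q ⊆ Set.range (Prod.map d d)) : K ⊆ Set.range (List.map (Prod.map d d)) := by
  intro l hl
  rw [Set.range_list_map]
  exact fun e he => hq ((hK.2.2 e).2 ⟨l, hl, he⟩)

theorem IsCycleDecomp.isDCDC_preimage (hK : IsCycleDecomp q K)
    (hq : q ⊆ Set.range (Prod.map d d)) (hG : ∀ x y, G.Adj x y ↔ (d x, d y) ∈ q) :
    IsDCDC G {l | l.map (Prod.map d d) ∈ K} := by
  have hinj : Injective (Prod.map d d) := d.injective.prodMap d.injective
  refine ⟨fun l hl => ?_, fun x y hxy => ?_⟩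
  · obtain ⟨hcyc, hlen⟩ := hK.1 _ hl
    refine ⟨(isDirectedCycle_map_prodMap_iff d.injective).1 hcyc, by simpa using hlen,
      fun e he => (hG _ _).2 ?_⟩
    exact (hK.2.2 _).2 ⟨_, hl, List.mem_map_of_mem (f := Prod.map d d) he⟩
  · obtain ⟨l, hl, hxyl⟩ := (hK.2.2 _).1 ((hG x y).1 hxy)
    obtain ⟨l, rfl⟩ := hK.subset_range_map hq hl
    refine ⟨l, ⟨hl, (List.mem_map_of_injective hinj).1 hxyl⟩, fun m ⟨hm, hxym⟩ => ?_⟩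
    by_contra hne
    exact hK.2.1 _ hm _ hl (fun h => hne (List.map_injective_iff.2 hinj h)) _
      (List.mem_map_of_mem (f := Prod.map d d) hxym) hxyl

end Lift

theorem IsCycleDecomp.mem_cSetD {V : Type*} {G : SimpleGraph V} {N : ℕ}
    {q : Set (Fin N × Fin N)} {K : Set (List (Fin N × Fin N))} {d : V ↪ Fin N}
    (hK : IsCycleDecomp q K) (hq : q ⊆ Set.range (Prod.map d d))
    (hG : ∀ x y, G.Adj x y ↔ (d x, d y) ∈ q) :
    (q, properPairing q, K) ∈ cSetD N G {l | l.map (Prod.map d d) ∈ K} := by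
  refine ⟨d, Set.ext fun e => ⟨fun he => ?_, ?_⟩, Set.ext fun p => ⟨?_, ?_⟩,
    (Set.image_preimage_eq_of_subset (hK.subset_range_map hq)).symm⟩
  · obtain ⟨⟨x, y⟩, rfl⟩ := hq he
    exact ⟨x, y, (hG x y).2 he, rfl⟩
  · rintro ⟨x, y, hxy, rfl⟩
    exact (hG x y).1 hxy
  · rintro ⟨_, _, hij, rfl⟩
    obtain ⟨⟨x, y⟩, hxy⟩ := hq hij
    obtain ⟨rfl, rfl⟩ := Prod.mk.inj hxy
    exact ⟨x, y, (hG x y).2 hij, rfl⟩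
  · rintro ⟨x, y, hxy, rfl⟩
    exact ⟨_, _, (hG x y).1 hxy, rfl⟩

namespace HasProperPairing

variable {N : ℕ} {q : Set (Fin N × Fin N)} {V : Type*} {d : V ↪ Fin N}

def graph (hP : HasProperPairing q) : SimpleGraph (Fin N) where
  Adj i j := (i, j) ∈ q
  symm := ⟨hP.1⟩
  loopless := ⟨hP.2⟩

theorem subset_range_prodMap (hP : HasProperPairing q) (hd : Set.range d = SetRel.dom q) :
    q ⊆ Set.range (Prod.map d d) := by
  rintro ⟨i, j⟩ hij
  rw [Set.range_prodMap, hd]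
  exact ⟨⟨j, hij⟩, ⟨i, hP.1 i j hij⟩⟩

theorem nimple_comap_graph (hP : HasProperPairing q) (hd : Set.range d = SetRel.dom q) :
    Nimple (hP.graph.comap d) := by
  intro v
  obtain ⟨j, hj⟩ : d v ∈ SetRel.dom q := hd ▸ Set.mem_range_self v
  obtain ⟨w, rfl⟩ : j ∈ Set.range d := hd ▸ ⟨d v, hP.1 _ _ hj⟩
  exact ⟨w, hj⟩

end HasProperPairing

theorem cycle_decomposition_iff_dcdc_general (N : ℕ)
    (q : Set (Fin N × Fin N)) (hP : HasProperPairing q)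
    (K : Set (List (Fin N × Fin N))) :
    IsCycleDecomp q K ↔
      ∃ n : ℕ, n ≤ N ∧ ∃ (G : SimpleGraph (Fin n)) (C : Set (List (Fin n × Fin n))),
        Nimple G ∧ IsDCDC G C ∧
        (q, properPairing q, K) ∈ cSetD N G C := by
  classical
  constructor
  · intro hK
    let s := (SetRel.dom q).toFinset
    let d := (s.orderEmbOfFin rfl).toEmbedding
    have hd : Set.range d = SetRel.dom q := by simp [d, s]
    have hq := hP.subset_range_prodMap hd
    exact ⟨s.card, card_finset_fin_le s, hP.graph.comap d, _, hP.nimple_comap_graph hd,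
      hK.isDCDC_preimage hq fun _ _ => .rfl, hK.mem_cSetD hq fun _ _ => .rfl⟩
  · rintro ⟨n, -, G, C, -, hC, d, rfl, -, rfl⟩
    exact hC.isCycleDecomp_map d

/-- for `q` with proper pairing `P` and a family `K` of directed
cycles, `q` is an even set with decomposition `K` into pairwise edge-disjoint
directed cycles of length at least three iff there are a nimple graph `G` with at
most `N` vertices and a directed cycle double cover `C` of `G` with
`(q, P, K) ∈ c(G,C)`. -/
theorem cycle_decomposition_iff_dcdc (N : ℕ) (hN : 0 < N)
    (q : Set (Fin N × Fin N)) (hP : HasProperPairing q)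
    (K : Set (List (Fin N × Fin N))) :
    IsCycleDecomp q K ↔
      ∃ n : ℕ, n ≤ N ∧ ∃ (G : SimpleGraph (Fin n)) (C : Set (List (Fin n × Fin n))),
        Nimple G ∧ IsDCDC G C ∧
        (q, properPairing q, K) ∈ cSetD N G C :=
  cycle_decomposition_iff_dcdc_general N q hP K
end

section
/- (Witt identity) Let k ≥ 1 and let z₁,…,z_k be commuting formal variables. For each tuple (m₁,…,m_k) of nonnegative integers, not all zero, let M(m₁,…,m_k) be the number of aperiodic necklaces over the alphabet {1,…,k} containing exactly m_i occurrences of the letter i for each i. Then, as an identity of formal power series in z₁,…,z_k, ∏_{(m₁,…,m_k)≠0} (1 − z₁^{m₁}⋯z_k^{m_k})^{M(m₁,…,m_k)} = 1 − z₁ − z₂ − ⋯ − z_k. -/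
/-- Rotation equivalence of words: `l'` is a cyclic rotation of `l`. -/
def RotEquiv {n : ℕ} (l l' : List (Fin n)) : Prop :=
  ∃ m, l' = l.rotate m

/-- A necklace over the alphabet `{1,…,n}`: a word up to cyclic rotation. -/
def Necklace (n : ℕ) : Type :=
  Quot (@RotEquiv n)

/-- The number of occurrences of a letter in a necklace. -/
def Necklace.count {n : ℕ} (a : Fin n) : Necklace n → ℕ :=
  Quot.lift (fun l => l.count a)
    (by rintro l l' ⟨m, rfl⟩; exact ((l.rotate_perm m).count_eq a).symm)

/-- The length of a necklace. -/
def Necklace.length {n : ℕ} : Necklace n → ℕ :=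
  Quot.lift List.length (by rintro l l' ⟨m, rfl⟩; exact (l.length_rotate m).symm)

/-- A necklace is aperiodic if it is fixed by no nontrivial cyclic rotation of its
positions. -/
def Necklace.Aperiodic {n : ℕ} (nk : Necklace n) : Prop :=
  ∀ l : List (Fin n), Quot.mk _ l = nk → ∀ m, 0 < m → m < l.length → l.rotate m ≠ l

/-- `M(m₁,…,m_k)`: the number of (nonempty) aperiodic necklaces over `{1,…,k}` with
exactly `m i` occurrences of the letter `i` for each `i`. -/
noncomputable def aperiodicNecklaceCount (k : ℕ) (m : Fin k →₀ ℕ) : ℕ :=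
  Set.ncard {nk : Necklace k |
    0 < Necklace.length nk ∧ Necklace.Aperiodic nk ∧ ∀ i, Necklace.count i nk = m i}

/-! Fix a linear order on the alphabet. By the Chen–Fox–Lyndon theorem every word is uniquely a
nonincreasing concatenation of Lyndon words, so words of content `e` correspond to multisets of
Lyndon words of total content `e`. Multiplying the series `∑_w z^(content w) = (1 - z₁ - ⋯ - z_k)⁻¹`
by `1 - z^(content u)` discards the multisets containing `u`; after doing this for every Lyndon word
of content `≤ e`, only the empty multiset survives below `e`. Finally, the Lyndon words of content
`m` are the least representatives of the aperiodic necklaces of content `m`, so there are `M(m)` of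
them. -/

namespace List

section Lex

variable {α : Type*} [LT α]

theorem append_lt_append_left_iff [Std.Irrefl (· < · : α → α → Prop)] {s t r : List α} :
    s ++ t < s ++ r ↔ t < r := by
  refine ⟨fun h => ?_, append_left_lt⟩
  induction s with
  | nil => exact h
  | cons a s ih =>
    cases h with
    | rel haa => exact absurd haa (Std.Irrefl.irrefl a)
    | cons h => exact ih h

theorem lt_append_of_ne_nil (s : List α) {t : List α} (ht : t ≠ []) : s < s ++ t := by
  obtain ⟨b, t, rfl⟩ := exists_cons_of_ne_nil ht
  simpa using append_left_lt (l₁ := s) (nil_lt_cons b t)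

theorem append_lt_append_of_lt_of_not_prefix {u v : List α} (h : u < v) (hp : ¬u <+: v)
    (x y : List α) : u ++ x < v ++ y := by
  induction h with
  | nil => exact absurd nil_prefix hp
  | rel hab => exact Lex.rel hab
  | cons _ ih => exact Lex.cons (ih fun hpre => hp (cons_prefix_cons.2 ⟨rfl, hpre⟩))

theorem lt_of_lt_append_of_not_prefix {w s x : List α} (h : w < s ++ x) (hp : ¬s <+: w) :
    w < s := by
  induction w generalizing s with
  | nil =>
    obtain ⟨b, s, rfl⟩ := exists_cons_of_ne_nil (fun hs => hp (hs ▸ nil_prefix))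
    exact Lex.nil
  | cons a w ih =>
    cases s with
    | nil => exact absurd nil_prefix hp
    | cons b s =>
      cases h with
      | rel hab => exact Lex.rel hab
      | cons h => exact Lex.cons (ih h fun hpre => hp (cons_prefix_cons.2 ⟨rfl, hpre⟩))

theorem lt_of_append_lt_append_of_length_eq [Std.Irrefl (· < · : α → α → Prop)]
    {x t : List α} (s : List α) (hl : x.length = t.length) (h : x ++ s < t ++ s) : x < t := by
  induction x generalizing t with
  | nil =>
    cases t with
    | nil => exact absurd h (List.lt_irrefl _)
    | cons b t => simp at hl
  | cons a x ih =>
    cases t with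
    | nil => simp at hl
    | cons b t =>
      cases h with
      | rel hab => exact Lex.rel hab
      | cons h => exact Lex.cons (ih (by simpa using hl) h)

end Lex

end List

open List

section Lyndon

variable {α : Type*} [LinearOrder α]

def Lyndon (w : List α) : Prop :=
  w ≠ [] ∧ ∀ m, 0 < m → m < w.length → w < w.rotate m

theorem Lyndon.ne_nil {w : List α} (hw : Lyndon w) : w ≠ [] := hw.1

theorem lyndon_singleton (a : α) : Lyndon [a] :=
  ⟨cons_ne_nil a [], fun m hm hm' => by simp at hm'; omega⟩

theorem Lyndon.lt_append_swap {x s : List α} (hw : Lyndon (x ++ s)) (hx : x ≠ [])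
    (hs : s ≠ []) : x ++ s < s ++ x := by
  have := hw.2 x.length (length_pos_iff.2 hx) (by simp [length_pos_iff.2 hs])
  rwa [rotate_append_length_eq] at this

theorem Lyndon.lt_suffix {x s : List α} (hw : Lyndon (x ++ s)) (hx : x ≠ []) (hs : s ≠ []) :
    x ++ s < s := by
  refine lt_of_lt_append_of_not_prefix (hw.lt_append_swap hx hs) ?_
  -- a border `s ++ t = x ++ s` would force both `t < x` and `x < t`
  rintro ⟨t, ht⟩
  have hlen : x.length = t.length := by
    have := congrArg length ht
    simp only [length_append] at this
    omega
  have ht0 : t ≠ [] := by rintro rfl; simp_all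
  have hst : s ++ t < s ++ x := ht ▸ hw.lt_append_swap hx hs
  have hxs : x ++ s < t ++ s := ht ▸ (ht ▸ hw : Lyndon (s ++ t)).lt_append_swap hs ht0
  exact lt_asymm (append_lt_append_left_iff.1 hst) (lt_of_append_lt_append_of_length_eq s hlen hxs)

theorem lyndon_of_forall_lt_suffix {w : List α} (hw : w ≠ [])
    (h : ∀ x s, x ++ s = w → x ≠ [] → s ≠ [] → w < s) : Lyndon w := by
  refine ⟨hw, fun m hm hmw => ?_⟩
  have hlt : w < w.drop m :=
    h _ _ (take_append_drop m w) (by simp [hw]; omega) (by simp; omega)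
  have hnp : ¬w <+: w.drop m := fun hp => by have := hp.length_le; simp at this; omega
  simpa [rotate_eq_drop_append_take hmw.le] using
    append_lt_append_of_lt_of_not_prefix hlt hnp [] (w.take m)

theorem Lyndon.append_lt {u v : List α} (hu : Lyndon u) (hv : Lyndon v) (huv : u < v) :
    u ++ v < v := by
  by_cases hp : u <+: v
  · obtain ⟨t, rfl⟩ := hp
    have ht : t ≠ [] := by rintro rfl; simp at huv
    exact append_lt_append_left_iff.2 (hv.lt_suffix hu.ne_nil ht)
  · simpa using append_lt_append_of_lt_of_not_prefix huv hp v []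

theorem Lyndon.append {u v : List α} (hu : Lyndon u) (hv : Lyndon v) (huv : u < v) :
    Lyndon (u ++ v) := by
  refine lyndon_of_forall_lt_suffix (by simp [hu.ne_nil]) fun x s hxs hx hs => ?_
  rcases append_eq_append_iff.1 hxs with ⟨u₂, rfl, rfl⟩ | ⟨v₁, rfl, rfl⟩
  · rcases eq_or_ne u₂ [] with rfl | hu₂
    · simpa using hu.append_lt hv huv
    · have hnp : ¬x ++ u₂ <+: u₂ := fun hp => by
        have := hp.length_le; simp at this; exact hx this
      simpa using append_lt_append_of_lt_of_not_prefix (hu.lt_suffix hx hu₂) hnp v v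
  · rcases eq_or_ne v₁ [] with rfl | hv₁
    · exact hu.append_lt hv huv
    · exact (hu.append_lt hv huv).trans (hv.lt_suffix hv₁ hs)

end Lyndon

section Factorization

variable {α : Type*} [LinearOrder α]

def IsLyndonFactorization (w : List α) (L : List (List α)) : Prop :=
  (∀ u ∈ L, Lyndon u) ∧ L.Pairwise (· ≥ ·) ∧ L.flatten = w

theorem exists_isLyndonFactorization_flatten (L : List (List α)) (hL : ∀ u ∈ L, Lyndon u) :
    ∃ L', IsLyndonFactorization L.flatten L' := by
  by_cases hc : L.IsChain (· ≥ ·)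
  · exact ⟨L, hL, isChain_iff_pairwise.1 hc, rfl⟩
  · obtain ⟨a, b, L₁, L₂, rfl, hab⟩ : ∃ a b L₁ L₂, L = L₁ ++ a :: b :: L₂ ∧ a < b := by
      simpa [isChain_iff_forall_rel_of_append_cons_cons] using hc
    have hmerged : ∀ u ∈ L₁ ++ (a ++ b) :: L₂, Lyndon u := by
      simp only [mem_append, List.mem_cons] at hL ⊢
      rintro u (hu | rfl | hu)
      · exact hL u (.inl hu)
      · exact (hL a (by simp)).append (hL b (by simp)) hab
      · exact hL u (by simp [hu])
    simpa using exists_isLyndonFactorization_flatten _ hmerged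
termination_by L.length
decreasing_by simp_all

theorem exists_isLyndonFactorization (w : List α) : ∃ L, IsLyndonFactorization w L := by
  simpa [← flatMap_def] using
    exists_isLyndonFactorization_flatten (w.map ([·])) (by simp [lyndon_singleton])

theorem IsLyndonFactorization.eq_nil_iff {w : List α} {L : List (List α)}
    (h : IsLyndonFactorization w L) : L = [] ↔ w = [] := by
  obtain ⟨hL, -, rfl⟩ := h
  refine ⟨fun hL0 => by simp [hL0], fun hw => ?_⟩
  rw [flatten_eq_nil_iff] at hw
  exact eq_nil_iff_forall_not_mem.2 fun u hu => (hL u hu).ne_nil (hw u hu)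

theorem Lyndon.le_of_isSuffix {v s : List α} (hv : Lyndon v) (hs : s <:+ v) (hs0 : s ≠ []) :
    v ≤ s := by
  obtain ⟨x, rfl⟩ := hs
  rcases eq_or_ne x [] with rfl | hx
  · simp
  · exact (hv.lt_suffix hx hs0).le

theorem IsLyndonFactorization.le_of_isSuffix {w u s : List α} {L : List (List α)}
    (h : IsLyndonFactorization w (L ++ [u])) (hs : s <:+ w) (hs0 : s ≠ []) : u ≤ s := by
  induction L generalizing w with
  | nil =>
    obtain ⟨hL, -, rfl⟩ := h
    exact (hL u (by simp)).le_of_isSuffix (by simpa using hs) hs0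
  | cons v L ih =>
    obtain ⟨hL, hsorted, rfl⟩ := h
    have htail : IsLyndonFactorization (L ++ [u]).flatten (L ++ [u]) :=
      ⟨fun x hx => hL x (mem_cons_of_mem v hx), hsorted.of_cons, rfl⟩
    have huv : u ≤ v := pairwise_cons.1 hsorted |>.1 u (by simp)
    obtain ⟨t, ht⟩ := hs
    rw [cons_append, flatten_cons] at ht
    rcases append_eq_append_iff.1 ht with ⟨s₀, rfl, rfl⟩ | ⟨t', -, ht'⟩
    · rcases eq_or_ne s₀ [] with rfl | hs₀
      · exact ih htail (by simp)
      · calc u ≤ t ++ s₀ := huv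
          _ ≤ s₀ := (hL _ (by simp)).le_of_isSuffix (suffix_append t s₀) hs₀
          _ ≤ s₀ ++ (L ++ [u]).flatten :=
            (lt_append_of_ne_nil s₀ (mt htail.eq_nil_iff.2 (by simp))).le
    · exact ih htail ⟨t', ht'.symm⟩

theorem IsLyndonFactorization.unique {w : List α} {L L' : List (List α)}
    (h : IsLyndonFactorization w L) (h' : IsLyndonFactorization w L') : L = L' := by
  induction L using List.reverseRecOn generalizing w L' with
  | nil => exact (h'.eq_nil_iff.2 (h.eq_nil_iff.1 rfl)).symm
  | append_singleton L u ih =>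
    obtain ⟨L'', u', rfl⟩ : ∃ L'' u', L' = L'' ++ [u'] := by
      refine (eq_nil_or_concat' L').resolve_left fun hL' => ?_
      simpa using h.eq_nil_iff.2 (h'.eq_nil_iff.1 hL')
    have hsuffix {L₀ : List (List α)} {v : List α} (hv : IsLyndonFactorization w (L₀ ++ [v])) :
        v <:+ w := hv.2.2 ▸ by simp
    have hu0 : u ≠ [] := (h.1 u (by simp)).ne_nil
    have hu'0 : u' ≠ [] := (h'.1 u' (by simp)).ne_nil
    obtain rfl : u = u' :=
      le_antisymm (h.le_of_isSuffix (hsuffix h') hu'0) (h'.le_of_isSuffix (hsuffix h) hu0)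
    have hflatten : L.flatten = L''.flatten := by simpa using h.2.2.trans h'.2.2.symm
    have hinit {L₀ : List (List α)} (hv : IsLyndonFactorization w (L₀ ++ [u])) :
        IsLyndonFactorization L₀.flatten L₀ :=
      ⟨fun x hx => hv.1 x (by simp [hx]), (pairwise_append.1 hv.2.1).1, rfl⟩
    rw [ih (hinit h) (hflatten ▸ hinit h')]

end Factorization

section Words

open Finset

variable {α : Type*} [DecidableEq α]

noncomputable def content (w : List α) : α →₀ ℕ := Multiset.toFinsupp w

@[simp]
theorem content_apply (w : List α) (a : α) : content w a = w.count a := by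
  simp [content]

@[simp]
theorem content_nil : content ([] : List α) = 0 := by
  simp [content]

theorem content_append (u v : List α) : content (u ++ v) = content u + content v := by
  simp [content, ← Multiset.coe_add, Multiset.toFinsupp_add]

theorem content_cons (a : α) (w : List α) : content (a :: w) = Finsupp.single a 1 + content w := by
  simpa [content] using content_append [a] w

theorem content_flatten (L : List (List α)) : content L.flatten = (L.map content).sum := by
  induction L with
  | nil => simp
  | cons u L ih => simp [content_append, ih]

theorem content_rotate (w : List α) (m : ℕ) : content (w.rotate m) = content w := by
  ext a
  simp [(w.rotate_perm m).count_eq]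

theorem degree_content (w : List α) : (content w).degree = w.length := by
  induction w with
  | nil => simp
  | cons a w ih => simp [content_cons, ih, add_comm]

theorem content_eq_zero_iff {w : List α} : content w = 0 ↔ w = [] := by
  rw [← Finsupp.degree_eq_zero_iff, degree_content, length_eq_zero_iff]

noncomputable def wordsWithContent (e : α →₀ ℕ) : Finset (List α) :=
  (Multiset.lists (Finsupp.toMultiset e)).toFinset

@[simp]
theorem mem_wordsWithContent {e : α →₀ ℕ} {w : List α} :
    w ∈ wordsWithContent e ↔ content w = e := by
  simp only [wordsWithContent, content, Multiset.mem_toFinset, Multiset.mem_lists_iff,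
    Multiset.toFinsupp_eq_iff]
  exact eq_comm

theorem wordsWithContent_zero : wordsWithContent (0 : α →₀ ℕ) = {[]} := by
  ext w
  simp [content_eq_zero_iff]

theorem card_filter_head?_eq_some (e : α →₀ ℕ) (a : α) :
    #{w ∈ wordsWithContent e | w.head? = some a} =
      if Finsupp.single a 1 ≤ e then #(wordsWithContent (e - Finsupp.single a 1)) else 0 := by
  split_ifs with ha
  · suffices {w ∈ wordsWithContent e | w.head? = some a} =
        (wordsWithContent (e - Finsupp.single a 1)).map ⟨cons a, cons_injective⟩ by
      rw [this, card_map]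
    ext w
    simp only [Finset.mem_filter, mem_wordsWithContent, Finset.mem_map, Function.Embedding.coeFn_mk]
    constructor
    · rintro ⟨rfl, hhead⟩
      obtain ⟨w, rfl⟩ := head?_eq_some_iff.1 hhead
      exact ⟨w, by simp [content_cons], rfl⟩
    · rintro ⟨w, hw, rfl⟩
      simp [content_cons, hw, add_tsub_cancel_of_le ha]
  · rw [card_eq_zero, filter_eq_empty_iff]
    rintro w hw hhead
    obtain ⟨w, rfl⟩ := head?_eq_some_iff.1 hhead
    rw [mem_wordsWithContent, content_cons] at hw
    exact ha (hw ▸ le_self_add)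

theorem card_wordsWithContent [Fintype α] {e : α →₀ ℕ} (he : e ≠ 0) :
    #(wordsWithContent e) = ∑ a,
      if Finsupp.single a 1 ≤ e then #(wordsWithContent (e - Finsupp.single a 1)) else 0 := by
  rw [card_eq_sum_card_fiberwise (f := head?) (t := univ) (by simp), Fintype.sum_option]
  simp only [card_filter_head?_eq_some, add_eq_right, card_eq_zero, filter_eq_empty_iff]
  rintro w hw hnil
  rw [head?_eq_none_iff.1 hnil, mem_wordsWithContent, content_nil] at hw
  exact he hw.symm

end Words

section WordSeries

open MvPowerSeries

variable (σ R : Type*) [DecidableEq σ] [Ring R]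

noncomputable def wordSeries : MvPowerSeries σ R := fun e => (wordsWithContent e).card

variable {σ R}

theorem coeff_wordSeries (e : σ →₀ ℕ) :
    coeff e (wordSeries σ R) = (wordsWithContent e).card := rfl

theorem wordSeries_mul_one_sub_sum_X [Fintype σ] : wordSeries σ R * (1 - ∑ i, X i) = 1 := by
  ext e
  have hX (i : σ) : coeff e (wordSeries σ R * X i) =
      if Finsupp.single i 1 ≤ e then ((wordsWithContent (e - Finsupp.single i 1)).card : R)
      else 0 := by
    rw [X_def, coeff_mul_monomial, mul_one, coeff_wordSeries]
  rw [mul_sub, mul_one, Finset.mul_sum, map_sub, map_sum, coeff_one, coeff_wordSeries]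
  simp only [hX]
  split_ifs with he
  · simp [he, wordsWithContent_zero]
  · rw [card_wordsWithContent he]
    push_cast
    exact sub_self _

end WordSeries

section LyndonMultisets

variable {α : Type*} [LinearOrder α]

def ofLyndonFactors (s : Multiset (List α)) : List α :=
  (s.sort (· ≥ ·)).flatten

theorem isLyndonFactorization_sort {s : Multiset (List α)} (hs : ∀ u ∈ s, Lyndon u) :
    IsLyndonFactorization (ofLyndonFactors s) (s.sort (· ≥ ·)) :=
  ⟨fun u hu => hs u ((Multiset.mem_sort _).1 hu), Multiset.pairwise_sort s _, rfl⟩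

theorem content_ofLyndonFactors (s : Multiset (List α)) :
    content (ofLyndonFactors s) = (s.map content).sum := by
  rw [ofLyndonFactors, content_flatten, ← Multiset.sum_coe, ← Multiset.map_coe, Multiset.sort_eq]

theorem ofLyndonFactors_injOn :
    Set.InjOn ofLyndonFactors {s : Multiset (List α) | ∀ u ∈ s, Lyndon u} := by
  intro s hs t ht h
  have := (isLyndonFactorization_sort hs).unique (h ▸ isLyndonFactorization_sort ht)
  rw [← Multiset.sort_eq s (· ≥ ·), this, Multiset.sort_eq]

theorem exists_ofLyndonFactors_eq (w : List α) :
    ∃ s : Multiset (List α), (∀ u ∈ s, Lyndon u) ∧ ofLyndonFactors s = w := by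
  obtain ⟨L, hL, hsorted, rfl⟩ := exists_isLyndonFactorization w
  exact ⟨L, hL, by rw [ofLyndonFactors, Multiset.coe_sort, mergeSort_eq_self _ hsorted]⟩

def lyndonMultisets (T : Finset (List α)) (e : α →₀ ℕ) : Set (Multiset (List α)) :=
  {s | (∀ u ∈ s, Lyndon u) ∧ (s.map content).sum = e ∧ ∀ u ∈ T, u ∉ s}

theorem bijOn_ofLyndonFactors (e : α →₀ ℕ) :
    Set.BijOn ofLyndonFactors (lyndonMultisets ∅ e) (wordsWithContent e) := by
  refine ⟨fun s hs => ?_, ofLyndonFactors_injOn.mono fun s hs => hs.1, fun w hw => ?_⟩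
  · simpa [content_ofLyndonFactors] using hs.2.1
  · obtain ⟨s, hs, rfl⟩ := exists_ofLyndonFactors_eq w
    refine ⟨s, ⟨hs, ?_, by simp⟩, rfl⟩
    simpa [content_ofLyndonFactors] using hw

theorem lyndonMultisets_finite (T : Finset (List α)) (e : α →₀ ℕ) :
    (lyndonMultisets T e).Finite := by
  refine Set.Finite.subset (s := lyndonMultisets ∅ e) ?_ fun s hs => ⟨hs.1, hs.2.1, by simp⟩
  refine Set.Finite.of_finite_image ?_ (bijOn_ofLyndonFactors e).injOn
  rw [(bijOn_ofLyndonFactors e).image_eq]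
  exact Finset.finite_toSet _

theorem image_cons_lyndonMultisets {v : List α} (hv : Lyndon v) {T : Finset (List α)}
    (hvT : v ∉ T) {e : α →₀ ℕ} (hle : content v ≤ e) :
    (v ::ₘ ·) '' lyndonMultisets T (e - content v) = {s ∈ lyndonMultisets T e | v ∈ s} := by
  ext s
  constructor
  · rintro ⟨s, ⟨hL, hsum, hT⟩, rfl⟩
    refine ⟨⟨?_, ?_, ?_⟩, Multiset.mem_cons_self v s⟩
    · simpa [hv] using hL
    · simp [hsum, add_tsub_cancel_of_le hle]
    · intro u hu hus
      rcases Multiset.mem_cons.1 hus with rfl | hus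
      exacts [hvT hu, hT u hu hus]
  · rintro ⟨⟨hL, hsum, hT⟩, hvs⟩
    obtain ⟨s, rfl⟩ := Multiset.exists_cons_of_mem hvs
    refine ⟨s, ⟨fun u hu => hL u (by simp [hu]), ?_, fun u hu hus => hT u hu (by simp [hus])⟩, rfl⟩
    simp [← hsum]

theorem ncard_lyndonMultisets_insert {v : List α} (hv : Lyndon v) {T : Finset (List α)}
    (hvT : v ∉ T) (e : α →₀ ℕ) :
    (lyndonMultisets T e).ncard = (lyndonMultisets (insert v T) e).ncard +
      if content v ≤ e then (lyndonMultisets T (e - content v)).ncard else 0 := by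
  have hsplit : lyndonMultisets T e =
      lyndonMultisets (insert v T) e ∪ {s ∈ lyndonMultisets T e | v ∈ s} := by
    ext s
    by_cases hvs : v ∈ s <;> simp [lyndonMultisets, hvs]
  have hdisj : Disjoint (lyndonMultisets (insert v T) e) {s ∈ lyndonMultisets T e | v ∈ s} :=
    Set.disjoint_left.2 fun s hs hs' => hs.2.2 v (Finset.mem_insert_self v T) hs'.2
  rw [hsplit, Set.ncard_union_eq hdisj (lyndonMultisets_finite _ _)
    ((lyndonMultisets_finite T e).subset (Set.sep_subset _ _))]
  congr 1
  split_ifs with hle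
  · rw [← image_cons_lyndonMultisets hv hvT hle,
      Set.ncard_image_of_injective _ fun _ _ => (Multiset.cons_inj_right v).1]
  · rw [Set.ncard_eq_zero (lyndonMultisets_finite T e |>.subset (Set.sep_subset _ _))]
    ext s
    simp only [Set.mem_ofPred_eq, Set.mem_empty_iff_false, iff_false, not_and]
    intro hs hvs
    exact hle (hs.2.1 ▸ Multiset.le_sum_of_mem (Multiset.mem_map_of_mem content hvs))

theorem ncard_lyndonMultisets_of_forall_mem {T : Finset (List α)} {e : α →₀ ℕ}
    (hTe : ∀ u, Lyndon u → content u ≤ e → u ∈ T) :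
    (lyndonMultisets T e).ncard = if e = 0 then 1 else 0 := by
  have hsub : lyndonMultisets T e ⊆ {0} := by
    intro s ⟨hL, hsum, hT⟩
    refine Multiset.eq_zero_of_forall_notMem fun u hus => hT u (hTe u (hL u hus) ?_) hus
    exact hsum ▸ Multiset.le_sum_of_mem (Multiset.mem_map_of_mem content hus)
  split_ifs with he
  · subst he
    rw [Set.ncard_eq_one]
    exact ⟨0, hsub.antisymm (by simp [lyndonMultisets])⟩
  · rw [Set.ncard_eq_zero (lyndonMultisets_finite T e), Set.eq_empty_iff_forall_notMem]
    intro s hs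
    obtain rfl := hsub hs
    exact he hs.2.1.symm

end LyndonMultisets

section LyndonProduct

open MvPowerSeries

variable {α R : Type*} [LinearOrder α] [CommRing R]

theorem coeff_wordSeries_mul_prod (T : Finset (List α)) (hT : ∀ u ∈ T, Lyndon u)
    (e : α →₀ ℕ) :
    coeff e (wordSeries α R * ∏ u ∈ T, (1 - monomial (content u) (1 : R))) =
      ((lyndonMultisets T e).ncard : R) := by
  induction T using Finset.induction_on generalizing e with
  | empty =>
    rw [Finset.prod_empty, mul_one, coeff_wordSeries, (bijOn_ofLyndonFactors e).ncard_eq,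
      Set.ncard_coe_finset]
  | insert v T hvT ih =>
    have hT' : ∀ u ∈ T, Lyndon u := fun u hu => hT u (Finset.mem_insert_of_mem hu)
    rw [Finset.prod_insert hvT, mul_left_comm, mul_comm, mul_sub, mul_one, map_sub,
      coeff_mul_monomial, mul_one, ih hT',
      ncard_lyndonMultisets_insert (hT v (Finset.mem_insert_self v T)) hvT e]
    split_ifs
    · rw [ih hT']
      push_cast
      ring
    · simp

theorem coeff_prod_one_sub_monomial_content [Fintype α] {T : Finset (List α)}
    (hT : ∀ u ∈ T, Lyndon u) {e : α →₀ ℕ} (hTe : ∀ u, Lyndon u → content u ≤ e → u ∈ T) :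
    coeff e (∏ u ∈ T, (1 - monomial (content u) (1 : R))) = coeff e (1 - ∑ i, X i) := by
  set P := ∏ u ∈ T, (1 - monomial (content u) (1 : R))
  have htrunc : trunc' R e (wordSeries α R * P) = trunc' R e 1 := by
    ext a
    simp only [coeff_trunc']
    split_ifs with ha
    · rw [coeff_wordSeries_mul_prod T hT, coeff_one,
        ncard_lyndonMultisets_of_forall_mem fun u hu hua => hTe u hu (hua.trans ha)]
      split_ifs <;> simp
    · rfl
  calc coeff e P = coeff e (wordSeries α R * P * (1 - ∑ i, X i)) := by
        rw [mul_right_comm, wordSeries_mul_one_sub_sum_X, one_mul]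
    _ = coeff e (1 * (1 - ∑ i, X i)) := by
        rw [← coeff_trunc'_mul_trunc'_eq_coeff_mul e _ _ le_rfl, htrunc,
          coeff_trunc'_mul_trunc'_eq_coeff_mul e _ _ le_rfl]
    _ = coeff e (1 - ∑ i, X i) := by rw [one_mul]

end LyndonProduct

section Rotations

theorem List.IsRotated.rotate_ne_self {α : Type*} {l l' : List α} (h : l ~r l') {m : ℕ}
    (hl : l.rotate m ≠ l) : l'.rotate m ≠ l' := by
  obtain ⟨n, rfl⟩ := h
  rw [rotate_rotate, add_comm, ← rotate_rotate, Ne, rotate_eq_rotate]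
  exact hl

variable {α : Type*} [LinearOrder α]

theorem Lyndon.lt_of_isRotated {u v : List α} (hu : Lyndon u) (h : u ~r v) (hne : u ≠ v) :
    u < v := by
  obtain ⟨n, hn, rfl⟩ := isRotated_iff_mod.1 h
  rcases Nat.eq_zero_or_pos n with rfl | hn0
  · exact absurd (rotate_zero u).symm hne
  rcases hn.lt_or_eq with hnu | rfl
  · exact hu.2 n hn0 hnu
  · exact absurd (rotate_length u).symm hne

theorem Lyndon.eq_of_isRotated {u v : List α} (hu : Lyndon u) (hv : Lyndon v) (h : u ~r v) :
    u = v := by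
  by_contra hne
  exact lt_asymm (hu.lt_of_isRotated h hne) (hv.lt_of_isRotated h.symm (Ne.symm hne))

/-- The least rotation of an aperiodic word is a Lyndon word. -/
theorem exists_lyndon_isRotated {l : List α} (hl : l ≠ [])
    (hap : ∀ m, 0 < m → m < l.length → l.rotate m ≠ l) : ∃ w, Lyndon w ∧ l ~r w := by
  set R := l.cyclicPermutations.toFinset
  have hR : R.Nonempty := ⟨l, by simp [R, mem_cyclicPermutations_iff, IsRotated.refl]⟩
  have hwR : R.min' hR ~r l := mem_cyclicPermutations_iff.1 (List.mem_toFinset.1 (R.min'_mem hR))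
  refine ⟨R.min' hR, ⟨fun h => hl ?_, fun m hm hmw => ?_⟩, hwR.symm⟩
  · simpa [h] using hwR
  · have hle : R.min' hR ≤ (R.min' hR).rotate m := R.min'_le _ <| by
      simpa [R, mem_cyclicPermutations_iff] using (IsRotated.forall _ m).trans hwR
    refine hle.lt_of_ne fun h => ?_
    exact hwR.symm.rotate_ne_self (hap m hm (hwR.perm.length_eq ▸ hmw)) h.symm

open scoped Classical in
noncomputable def lyndonWordsWithContent (e : α →₀ ℕ) : Finset (List α) :=
  {w ∈ wordsWithContent e | Lyndon w}

theorem mem_lyndonWordsWithContent {e : α →₀ ℕ} {w : List α} :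
    w ∈ lyndonWordsWithContent e ↔ Lyndon w ∧ content w = e := by
  simp [lyndonWordsWithContent, and_comm]

end Rotations

section Necklaces

variable {k : ℕ}

def Necklace.mk : List (Fin k) → Necklace k := Quot.mk _

theorem Necklace.mk_eq_mk_iff {l l' : List (Fin k)} :
    Necklace.mk l = Necklace.mk l' ↔ l ~r l' := by
  have hrel : @RotEquiv k = (· ~r ·) := by
    ext l l'
    exact exists_congr fun _ => eq_comm
  have hequiv : Equivalence (@RotEquiv k) :=
    hrel ▸ ⟨IsRotated.refl, IsRotated.symm, IsRotated.trans⟩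
  exact Quot.eq.trans (hequiv.eqvGen_iff.trans (by rw [hrel]))

theorem Necklace.aperiodic_mk_iff {l : List (Fin k)} :
    (Necklace.mk l).Aperiodic ↔ ∀ m, 0 < m → m < l.length → l.rotate m ≠ l := by
  refine ⟨fun h => h l rfl, fun h l' hl' m hm hml' => ?_⟩
  have hll' : l ~r l' := (Necklace.mk_eq_mk_iff.1 hl').symm
  exact hll'.rotate_ne_self (h m hm (hll'.perm.length_eq ▸ hml'))

theorem image_mk_lyndonWordsWithContent (m : Fin k →₀ ℕ) :
    Necklace.mk '' (lyndonWordsWithContent m : Set (List (Fin k))) =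
      {nk : Necklace k | 0 < nk.length ∧ nk.Aperiodic ∧ ∀ i, nk.count i = m i} := by
  ext nk
  induction nk using Quot.ind with | mk l => ?_
  have hcount : (∀ i, (Necklace.mk l).count i = m i) ↔ content l = m := by
    show (∀ i, l.count i = m i) ↔ _
    simp [Finsupp.ext_iff]
  change Necklace.mk l ∈ Necklace.mk '' _ ↔
    0 < l.length ∧ (Necklace.mk l).Aperiodic ∧ ∀ i, (Necklace.mk l).count i = m i
  simp only [hcount, Necklace.aperiodic_mk_iff, Set.mem_image, Finset.mem_coe,
    mem_lyndonWordsWithContent]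
  constructor
  · rintro ⟨w, ⟨hw, rfl⟩, hwl⟩
    obtain ⟨n, rfl⟩ := Necklace.mk_eq_mk_iff.1 hwl
    refine ⟨by simpa using length_pos_iff.2 hw.ne_nil, fun j hj hjw => ?_, content_rotate w n⟩
    exact (IsRotated.forall w n).symm.rotate_ne_self (hw.2 j hj (by simpa using hjw)).ne'
  · rintro ⟨hl, hap, rfl⟩
    obtain ⟨w, hw, n, rfl⟩ := exists_lyndon_isRotated (length_pos_iff.1 hl) hap
    exact ⟨l.rotate n, ⟨hw, content_rotate l n⟩, Necklace.mk_eq_mk_iff.2 (IsRotated.forall l n)⟩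

theorem aperiodicNecklaceCount_eq_card (m : Fin k →₀ ℕ) :
    aperiodicNecklaceCount k m = (lyndonWordsWithContent m).card := by
  rw [aperiodicNecklaceCount, ← image_mk_lyndonWordsWithContent, Set.InjOn.ncard_image,
    Set.ncard_coe_finset]
  intro u hu v hv huv
  exact (mem_lyndonWordsWithContent.1 hu).1.eq_of_isRotated (mem_lyndonWordsWithContent.1 hv).1
    (Necklace.mk_eq_mk_iff.1 huv)

theorem prod_pow_aperiodicNecklaceCount {R : Type*} [CommRing R] (F : Finset (Fin k →₀ ℕ)) :
    ∏ m ∈ F, (1 - MvPowerSeries.monomial m (1 : R)) ^ aperiodicNecklaceCount k m =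
      ∏ u ∈ F.biUnion lyndonWordsWithContent, (1 - MvPowerSeries.monomial (content u) 1) := by
  rw [Finset.prod_biUnion]
  · refine Finset.prod_congr rfl fun m _ => ?_
    rw [aperiodicNecklaceCount_eq_card, ← Finset.prod_const]
    exact Finset.prod_congr rfl fun u hu => by rw [(mem_lyndonWordsWithContent.1 hu).2]
  · intro m _ m' _ hmm'
    exact Finset.disjoint_left.2 fun u hu hu' =>
      hmm' ((mem_lyndonWordsWithContent.1 hu).2.symm.trans (mem_lyndonWordsWithContent.1 hu').2)

end Necklaces

theorem witt_identity_general (k : ℕ) (e : Fin k →₀ ℕ)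
    (F : Finset (Fin k →₀ ℕ))
    (hF : ∀ m : Fin k →₀ ℕ, m ≠ 0 →
      (m.sum fun _ v => v) ≤ (e.sum fun _ v => v) → m ∈ F) :
    MvPowerSeries.coeff (R := ℤ) e
        (∏ m ∈ F, (1 - MvPowerSeries.monomial (R := ℤ) m 1) ^ aperiodicNecklaceCount k m) =
      MvPowerSeries.coeff (R := ℤ) e (1 - ∑ i : Fin k, MvPowerSeries.X i) := by
  rw [prod_pow_aperiodicNecklaceCount]
  refine coeff_prod_one_sub_monomial_content (fun u hu => ?_) fun u hu hue => ?_
  · obtain ⟨m, -, hu⟩ := Finset.mem_biUnion.1 hu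
    exact (mem_lyndonWordsWithContent.1 hu).1
  · have hu0 : content u ≠ 0 := mt content_eq_zero_iff.1 hu.ne_nil
    exact Finset.mem_biUnion.2
      ⟨content u, hF _ hu0 (Finsupp.degree_mono hue), mem_lyndonWordsWithContent.2 ⟨hu, rfl⟩⟩

/-- **Witt identity**: as formal power series in `z₁,…,z_k`,
`∏_{m ≠ 0} (1 − z^m)^{M(m)} = 1 − z₁ − ⋯ − z_k`.  The infinite product is understood
via its finite truncations: each factor is `1` plus terms of total degree `≥ 1`, and
only finitely many factors contribute to any fixed total degree, so the identity
states that for every exponent `e` and every finite set `F` of nonzero exponent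
tuples containing all tuples of total degree at most that of `e`, the coefficient of
`e` in `∏_{m ∈ F} (1 − z^m)^{M(m)}` equals the coefficient of `e` in
`1 − z₁ − ⋯ − z_k`. -/
theorem witt_identity (k : ℕ) (hk : 1 ≤ k) (e : Fin k →₀ ℕ)
    (F : Finset (Fin k →₀ ℕ)) (hF0 : (0 : Fin k →₀ ℕ) ∉ F)
    (hF : ∀ m : Fin k →₀ ℕ, m ≠ 0 →
      (m.sum fun _ v => v) ≤ (e.sum fun _ v => v) → m ∈ F) :
    MvPowerSeries.coeff (R := ℤ) e
        (∏ m ∈ F, (1 - MvPowerSeries.monomial (R := ℤ) m 1) ^ aperiodicNecklaceCount k m) =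
      MvPowerSeries.coeff (R := ℤ) e (1 - ∑ i : Fin k, MvPowerSeries.X i) :=
  witt_identity_general k e F hF
end
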